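/- arXiv:math/0506254 — 3 statements merged into one kernel-verified Lean document; each statement's English description precedes it below -/
import Mathlib

section
/- Let K be a nonempty compact topological space and G : K × K → [0,∞] a symmetric kernel such that for each fixed y ∈ K, the function x ↦ G(x, y) is lower semicontinuous (so infima over K of finite sums of such functions are attained). Then the transfinite diameter does not exceed the Tchebycheff constant: D(K) := sup_m D_m(K) ≤ E(K) := sup_m E_m(K), where D_m and E_m are as in Nakai's construction. -/
open scoped ENNReal BigOperators

/-- A lower semicontinuous `ℝ≥0∞`-valued function on a nonempty compact space attains
its infimum. -/
lemma lsc_exists_min {K : Type*} [TopologicalSpace K] [CompactSpace K] [Nonempty K]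
    (f : K → ℝ≥0∞) (hf : LowerSemicontinuous f) : ∃ w : K, f w = ⨅ y : K, f y := by
  rcases eq_top_or_lt_top (⨅ y : K, f y) with h | h
  · exact ⟨Classical.arbitrary K, le_antisymm (h ▸ le_top) (iInf_le f _)⟩
  · have hne : Nonempty {t : ℝ≥0∞ // (⨅ y : K, f y) < t} := ⟨⟨⊤, h⟩⟩
    have hnonempty : ∀ t : {t : ℝ≥0∞ // (⨅ y : K, f y) < t},
        ({x : K | f x ≤ t.1}).Nonempty := by
      intro t
      obtain ⟨x, hx⟩ := iInf_lt_iff.mp t.2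
      exact ⟨x, hx.le⟩
    have hdir : Directed (· ⊇ ·) (fun t : {t : ℝ≥0∞ // (⨅ y : K, f y) < t} =>
        {x : K | f x ≤ t.1}) := by
      intro s t
      refine ⟨⟨min s.1 t.1, lt_min s.2 t.2⟩, ?_, ?_⟩
      · intro x hx
        exact le_trans (Set.mem_setOf_eq ▸ hx) (min_le_left _ _)
      · intro x hx
        exact le_trans (Set.mem_setOf_eq ▸ hx) (min_le_right _ _)
    obtain ⟨x, hx⟩ := IsCompact.nonempty_iInter_of_directed_nonempty_isCompact_isClosed
      _ hdir hnonempty (fun t => (hf.isClosed_preimage t.1).isCompact)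
      (fun t => hf.isClosed_preimage t.1)
    refine ⟨x, le_antisymm ?_ (iInf_le f x)⟩
    refine le_of_forall_gt_imp_ge_of_dense ?_
    intro t ht
    exact Set.mem_iInter.mp hx ⟨t, ht⟩

/-- For a symmetric kernel `G` on a nonempty compact space `K`, lower semicontinuous in
each variable, the transfinite diameter `D(K)` does not exceed the Tchebycheff
constant `E(K)`. -/
theorem stmt8 {K : Type*} [TopologicalSpace K] [CompactSpace K] [Nonempty K]
    (G : K → K → ℝ≥0∞) (hsym : ∀ x y, G x y = G y x)
    (hlsc : ∀ y, LowerSemicontinuous fun x => G x y) :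
    (⨆ m : ℕ, ⨆ _ : 2 ≤ m, ⨅ x : Fin m → K, ((m.choose 2 : ℝ≥0∞))⁻¹ *
        ∑ p ∈ Finset.univ.filter (fun p : Fin m × Fin m => p.1 < p.2), G (x p.1) (x p.2))
    ≤ ⨆ m : ℕ, ⨆ _ : 1 ≤ m, ⨆ x : Fin m → K,
        (m : ℝ≥0∞)⁻¹ * ⨅ y : K, ∑ i, G y (x i) := by
  classical
  set E : ℝ≥0∞ := ⨆ m : ℕ, ⨆ _ : 1 ≤ m, ⨆ x : Fin m → K,
      (m : ℝ≥0∞)⁻¹ * ⨅ y : K, ∑ i, G y (x i) with hEdef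
  -- the key bound: for any `k ≥ 1` and points `z`, the inf of the sum is at most `k * E`
  have hE : ∀ (k : ℕ), 1 ≤ k → ∀ z : ℕ → K,
      (⨅ y : K, ∑ l ∈ Finset.range k, G y (z l)) ≤ (k : ℝ≥0∞) * E := by
    intro k hk z
    have h1 : ((k : ℝ≥0∞))⁻¹ * (⨅ y : K, ∑ l ∈ Finset.range k, G y (z l)) ≤ E := by
      rw [hEdef]
      refine le_trans ?_ (le_iSup _ k)
      refine le_trans ?_ (le_iSup _ hk)
      refine le_trans ?_ (le_iSup _ (fun i : Fin k => z i))
      apply le_of_eq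
      congr 1
      refine le_antisymm (le_iInf fun y => ?_) (le_iInf fun y => ?_) <;>
        refine le_trans (iInf_le _ y) (le_of_eq ?_)
      · exact (Fin.sum_univ_eq_sum_range (fun l => G y (z l)) k).symm
      · exact Fin.sum_univ_eq_sum_range (fun l => G y (z l)) k
    have hk0 : (k : ℝ≥0∞) ≠ 0 := Nat.cast_ne_zero.mpr (by omega)
    have hktop : (k : ℝ≥0∞) ≠ ⊤ := ENNReal.natCast_ne_top k
    calc (⨅ y : K, ∑ l ∈ Finset.range k, G y (z l))
        = (k : ℝ≥0∞) * ((k : ℝ≥0∞))⁻¹ * (⨅ y : K, ∑ l ∈ Finset.range k, G y (z l)) := by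
          rw [ENNReal.mul_inv_cancel hk0 hktop, one_mul]
      _ = (k : ℝ≥0∞) * (((k : ℝ≥0∞))⁻¹ * (⨅ y : K, ∑ l ∈ Finset.range k, G y (z l))) := by
          rw [mul_assoc]
      _ ≤ (k : ℝ≥0∞) * E := mul_le_mul_right h1 _
  refine iSup_le fun m => iSup_le fun hm => ?_
  -- construct the greedy sequence
  have hz : ∀ n : ℕ, ∃ z : ℕ → K, ∀ k < n,
      (∑ l ∈ Finset.range k, G (z k) (z l)) = ⨅ y : K, ∑ l ∈ Finset.range k, G y (z l) := by
    intro n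
    induction n with
    | zero => exact ⟨fun _ => Classical.arbitrary K, fun k hk => absurd hk (Nat.not_lt_zero k)⟩
    | succ n ih =>
      obtain ⟨z, hzk⟩ := ih
      have hlscf : LowerSemicontinuous fun y => ∑ l ∈ Finset.range n, G y (z l) :=
        lowerSemicontinuous_sum fun l _ => hlsc (z l)
      obtain ⟨w, hw⟩ := lsc_exists_min _ hlscf
      refine ⟨Function.update z n w, fun k hk => ?_⟩
      have hupd : ∀ l < n, Function.update z n w l = z l := fun l hl =>
        Function.update_of_ne (Nat.ne_of_lt hl) _ _
      rcases Nat.lt_or_ge k n with hkn | hkn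
      · have h1 : Function.update z n w k = z k := hupd k hkn
        have h2 : ∀ l ∈ Finset.range k, G (Function.update z n w k) (Function.update z n w l)
            = G (z k) (z l) := fun l hl => by
          rw [h1, hupd l (lt_trans (Finset.mem_range.mp hl) hkn)]
        rw [Finset.sum_congr rfl h2, hzk k hkn]
        congr 1
        ext y
        exact Finset.sum_congr rfl fun l hl =>
          by rw [hupd l (lt_trans (Finset.mem_range.mp hl) hkn)]
      · have hkn' : k = n := by omega
        subst hkn'
        have h1 : Function.update z k w k = w := Function.update_self _ _ _
        have h2 : ∀ l ∈ Finset.range k, Function.update z k w l = z l := fun l hl =>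
          hupd l (Finset.mem_range.mp hl)
        rw [Finset.sum_congr rfl fun l hl => by rw [h1, h2 l hl]]
        rw [hw]
        congr 1
        ext y
        exact (Finset.sum_congr rfl fun l hl => by rw [h2 l hl]).symm
  obtain ⟨z, hzk⟩ := hz m
  refine le_trans (iInf_le _ (fun i : Fin m => z i)) ?_
  -- rewrite the pair sum
  have inner : ∀ j : Fin m, (∑ i : Fin m, if i < j then G (z ((j : Fin m) : ℕ)) (z (i : ℕ)) else 0)
      = ∑ l ∈ Finset.range (j : ℕ), G (z (j : ℕ)) (z l) := by
    intro j
    have h1 : (∑ i : Fin m, if i < j then G (z ((j : Fin m) : ℕ)) (z (i : ℕ)) else 0)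
        = ∑ l ∈ Finset.range m, if l < (j : ℕ) then G (z (j : ℕ)) (z l) else 0 := by
      rw [← Fin.sum_univ_eq_sum_range (fun l => if l < (j : ℕ) then G (z (j : ℕ)) (z l) else 0) m]
      exact Finset.sum_congr rfl fun i _ => by simp only [Fin.lt_def]
    have h2 : (Finset.range m).filter (fun l => l < (j : ℕ)) = Finset.range (j : ℕ) := by
      ext l
      simp only [Finset.mem_filter, Finset.mem_range]
      have := j.isLt
      omega
    rw [h1, ← Finset.sum_filter, h2]
  have hS : (∑ p ∈ Finset.univ.filter (fun p : Fin m × Fin m => p.1 < p.2),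
        G (z ((p.1 : Fin m) : ℕ)) (z ((p.2 : Fin m) : ℕ)))
      = ∑ j ∈ Finset.range m, ∑ l ∈ Finset.range j, G (z j) (z l) := by
    rw [Finset.sum_congr rfl (fun p _ => hsym (z ((p.1 : Fin m) : ℕ)) (z ((p.2 : Fin m) : ℕ)))]
    rw [Finset.sum_filter, Fintype.sum_prod_type, Finset.sum_comm]
    rw [Finset.sum_congr rfl fun j (_ : j ∈ Finset.univ) => inner j]
    exact Fin.sum_univ_eq_sum_range (fun j => ∑ l ∈ Finset.range j, G (z j) (z l)) m
  rw [hS]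
  -- bound the sum
  have hsum_le : (∑ j ∈ Finset.range m, ∑ l ∈ Finset.range j, G (z j) (z l))
      ≤ ∑ j ∈ Finset.range m, (j : ℝ≥0∞) * E := by
    refine Finset.sum_le_sum fun j hj => ?_
    rcases Nat.eq_zero_or_pos j with h0 | h1
    · subst h0; simp
    · rw [hzk j (Finset.mem_range.mp hj)]
      exact hE j h1 z
  have hgauss : (∑ j ∈ Finset.range m, (j : ℝ≥0∞)) = (m.choose 2 : ℝ≥0∞) := by
    rw [← Nat.cast_sum]
    congr 1
    rw [Finset.sum_range_id, Nat.choose_two_right]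
  have hfinal : (∑ j ∈ Finset.range m, (j : ℝ≥0∞) * E) = (m.choose 2 : ℝ≥0∞) * E := by
    rw [← Finset.sum_mul, hgauss]
  have hb0 : ((m.choose 2 : ℕ) : ℝ≥0∞) ≠ 0 := by
    have : 0 < m.choose 2 := Nat.choose_pos hm
    exact_mod_cast this.ne'
  have hbtop : ((m.choose 2 : ℕ) : ℝ≥0∞) ≠ ⊤ := ENNReal.natCast_ne_top _
  calc ((m.choose 2 : ℝ≥0∞))⁻¹ * ∑ j ∈ Finset.range m, ∑ l ∈ Finset.range j, G (z j) (z l)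
      ≤ ((m.choose 2 : ℝ≥0∞))⁻¹ * ((m.choose 2 : ℝ≥0∞) * E) := by
        rw [hfinal] at hsum_le
        exact mul_le_mul_right hsum_le _
    _ = E := by rw [← mul_assoc, ENNReal.inv_mul_cancel hb0 hbtop, one_mul]
end

section
/- Let ρ₁ and ρ₂ be two real-valued pluriharmonic functions on a connected complex manifold X. Then the differentials dρ₁ and dρ₂ are linearly dependent (i.e., 1, ρ₁, ρ₂ are linearly dependent as functions) if and only if dρ₁ ∧ dρ₂ ≡ 0 on X. -/
/-!
Write `ρⱼ = Re fⱼ` locally, with `fⱼ` holomorphic. At a point, `dρ₁ ∧ dρ₂ = 0` says exactly that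
`df₂ = s • df₁` for a real `s`. Along a complex line, the quotient of the derivatives of `f₂` and
`f₁` is therefore a real-valued holomorphic function, locally constant by the open mapping theorem;
by the identity theorem, `f₂ - μ f₁` is then constant along each line through `x₀` in a direction
`v` with `df₁(x₀) v ≠ 0`. So `ρ₂ - μ ρ₁` is constant on an open set, and the identity principle for
pluriharmonic functions (again proved along complex lines) spreads this over the connected set `U`.
-/

/-- `ρ` is pluriharmonic on `U`: locally the real part of a holomorphic function. -/
def PluriharmonicOn {E : Type*} [NormedAddCommGroup E] [NormedSpace ℂ E]
    (ρ : E → ℝ) (U : Set E) : Prop :=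
  ∀ x ∈ U, ∃ V ∈ nhds x, V ⊆ U ∧
    ∃ f : E → ℂ, DifferentiableOn ℂ f V ∧ ∀ y ∈ V, ρ y = (f y).re

open Filter Topology Set Metric Complex

theorem mul_eq_mul_of_linear_combination_eq_zero {R : Type*} [CommRing R] [NoZeroDivisors R]
    {a₁ a₂ x₁ y₁ x₂ y₂ : R} (ha : ¬(a₁ = 0 ∧ a₂ = 0))
    (h₁ : a₁ * x₁ + a₂ * y₁ = 0) (h₂ : a₁ * x₂ + a₂ * y₂ = 0) : x₁ * y₂ = x₂ * y₁ := by
  have e₁ : a₁ * (x₁ * y₂ - x₂ * y₁) = 0 := by linear_combination y₂ * h₁ - y₁ * h₂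
  have e₂ : a₂ * (x₁ * y₂ - x₂ * y₁) = 0 := by linear_combination x₁ * h₂ - x₂ * h₁
  by_contra hne
  have hD : x₁ * y₂ - x₂ * y₁ ≠ 0 := sub_ne_zero.2 hne
  exact ha ⟨(mul_eq_zero.1 e₁).resolve_right hD, (mul_eq_zero.1 e₂).resolve_right hD⟩

namespace ContinuousLinearMap

variable {E : Type*} [AddCommGroup E] [Module ℂ E] [TopologicalSpace E]

theorem ext_re {L M : E →L[ℂ] ℂ} (h : ∀ v, (L v).re = (M v).re) : L = M := by
  ext v
  refine Complex.ext (h v) ?_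
  simpa [Complex.I_mul_re] using h (I • v)

theorem exists_ofReal_smul_eq_of_re_mul_re_comm {L₁ L₂ : E →L[ℂ] ℂ}
    (h : ∀ v w, (L₁ v).re * (L₂ w).re = (L₁ w).re * (L₂ v).re) (hL₁ : L₁ ≠ 0) :
    ∃ s : ℝ, L₂ = (s : ℂ) • L₁ := by
  obtain ⟨u, hu⟩ : ∃ u, L₁ u = 1 := by
    obtain ⟨v, hv⟩ : ∃ v, L₁ v ≠ 0 := by
      by_contra! h0
      exact hL₁ (ext h0)
    exact ⟨(L₁ v)⁻¹ • v, by simp [hv]⟩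
  refine ⟨(L₂ u).re, ext_re fun w => ?_⟩
  have := h u w
  simp only [hu, one_re, one_mul] at this
  simp [this, mul_comm]

theorem im_apply_div_apply_eq_zero_of_re_mul_re_comm {L₁ L₂ : E →L[ℂ] ℂ}
    (h : ∀ v w, (L₁ v).re * (L₂ w).re = (L₁ w).re * (L₂ v).re) (v : E) :
    (L₂ v / L₁ v).im = 0 := by
  rcases eq_or_ne L₁ 0 with rfl | hL₁
  · simp
  obtain ⟨s, rfl⟩ := exists_ofReal_smul_eq_of_re_mul_re_comm h hL₁
  rcases eq_or_ne (L₁ v) 0 with h0 | h0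
  · simp [h0]
  · simp [mul_div_cancel_right₀ _ h0]

end ContinuousLinearMap

section Line

variable {𝕜 : Type*} [NontriviallyNormedField 𝕜] {E F : Type*} [NormedAddCommGroup E]
  [NormedSpace 𝕜 E] [NormedAddCommGroup F] [NormedSpace 𝕜 F] {f : E → F} {B : Set E}

theorem IsOpen.setOf_add_smul_mem (hB : IsOpen B) (y v : E) : IsOpen {t : 𝕜 | y + t • v ∈ B} :=
  hB.preimage (by fun_prop)

theorem DifferentiableOn.hasDerivAt_add_smul (hf : DifferentiableOn 𝕜 f B) (hB : IsOpen B)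
    {y v : E} {t : 𝕜} (ht : y + t • v ∈ B) :
    HasDerivAt (fun s : 𝕜 => f (y + s • v)) (fderiv 𝕜 f (y + t • v) v) t := by
  have hline : HasDerivAt (fun s : 𝕜 => y + s • v) v t := by
    simpa using ((hasDerivAt_id t).smul_const v).const_add y
  exact (hf.differentiableAt (hB.mem_nhds ht)).hasFDerivAt.comp_hasDerivAt t hline

theorem DifferentiableOn.comp_add_smul (hf : DifferentiableOn 𝕜 f B) (hB : IsOpen B) (y v : E) :
    DifferentiableOn 𝕜 (fun s : 𝕜 => f (y + s • v)) {t | y + t • v ∈ B} :=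
  fun _ ht => (hf.hasDerivAt_add_smul hB ht).differentiableAt.differentiableWithinAt

end Line

theorem Convex.setOf_add_smul_mem {E : Type*} [NormedAddCommGroup E] [NormedSpace ℂ E]
    {B : Set E} (hB : Convex ℝ B) (y v : E) : Convex ℝ {t : ℂ | y + t • v ∈ B} :=
  (hB.translate_preimage_right y).is_linear_preimage
    ⟨fun s t => add_smul s t v, fun c s => smul_assoc c s v⟩

section OneVariable

variable {φ φ₁ φ₂ : ℂ → ℂ} {Ω : Set ℂ} {t₀ : ℂ}

theorem DifferentiableOn.eqOn_of_isPreconnected_of_eventually_re_eq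
    (hφ : DifferentiableOn ℂ φ Ω) (hΩ : IsOpen Ω) (hpc : IsPreconnected Ω) (ht₀ : t₀ ∈ Ω)
    {c : ℝ} (hc : ∀ᶠ t in 𝓝 t₀, (φ t).re = c) : ∀ t ∈ Ω, φ t = φ t₀ := by
  have hA := hφ.analyticOnNhd hΩ
  obtain ⟨ε, hε, hball⟩ : ∃ ε > 0, ball t₀ ε ⊆ Ω ∩ {t | (φ t).re = c} :=
    Metric.mem_nhds_iff.1 (inter_mem (hΩ.mem_nhds ht₀) hc)
  obtain ⟨w, hw⟩ := (hA.mono (hball.trans inter_subset_left)).eq_const_of_re_eq_const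
    (fun t ht => (hball ht).2) isOpen_ball (isConnected_ball hε)
  have hEq := hA.eqOn_of_preconnected_of_eventuallyEq analyticOnNhd_const hpc ht₀
    (eventually_of_mem (ball_mem_nhds t₀ hε) hw)
  intro t ht
  rw [hEq ht, hw t₀ (mem_ball_self hε)]

-- `hreal` says nothing at the zeros of `deriv φ₁`, where the quotient is `x / 0 = 0`.
theorem sub_mul_eqOn_of_isPreconnected_of_im_deriv_div_eq_zero
    (hφ₁ : DifferentiableOn ℂ φ₁ Ω) (hφ₂ : DifferentiableOn ℂ φ₂ Ω) (hΩ : IsOpen Ω)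
    (hpc : IsPreconnected Ω) (hreal : ∀ t ∈ Ω, (deriv φ₂ t / deriv φ₁ t).im = 0)
    (ht₀ : t₀ ∈ Ω) (hne : deriv φ₁ t₀ ≠ 0) :
    ∀ t ∈ Ω, φ₂ t - deriv φ₂ t₀ / deriv φ₁ t₀ * φ₁ t
      = φ₂ t₀ - deriv φ₂ t₀ / deriv φ₁ t₀ * φ₁ t₀ := by
  set μ := deriv φ₂ t₀ / deriv φ₁ t₀
  have A₁ := (hφ₁.analyticOnNhd hΩ).deriv
  have A₂ := (hφ₂.analyticOnNhd hΩ).deriv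
  obtain ⟨ε, hε, hball⟩ : ∃ ε > 0, ball t₀ ε ⊆ Ω ∩ {t | deriv φ₁ t ≠ 0} :=
    Metric.mem_nhds_iff.1
      (inter_mem (hΩ.mem_nhds ht₀) ((A₁ t₀ ht₀).continuousAt.eventually_ne hne))
  -- open mapping: the real-valued holomorphic quotient is constant near `t₀`
  obtain ⟨w, hw⟩ := AnalyticOnNhd.eq_const_of_im_eq_const (f := fun t => deriv φ₂ t / deriv φ₁ t)
    (fun t ht => (A₂ t (hball ht).1).div (A₁ t (hball ht).1) (hball ht).2)
    (fun t ht => hreal t (hball ht).1) isOpen_ball (isConnected_ball hε)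
  have hwμ : w = μ := (hw t₀ (mem_ball_self hε)).symm
  have hg : DifferentiableOn ℂ (fun t => φ₂ t - μ * φ₁ t) Ω := hφ₂.sub (hφ₁.const_mul μ)
  have hzero : EqOn (deriv fun t => φ₂ t - μ * φ₁ t) 0 Ω := by
    refine (hg.analyticOnNhd hΩ).deriv.eqOn_zero_of_preconnected_of_eventuallyEq_zero hpc ht₀ ?_
    filter_upwards [ball_mem_nhds t₀ hε] with t ht
    have hΩt := hΩ.mem_nhds (hball ht).1
    have hD : HasDerivAt (fun t => φ₂ t - μ * φ₁ t) (deriv φ₂ t - μ * deriv φ₁ t) t :=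
      (hφ₂.differentiableAt hΩt).hasDerivAt.sub ((hφ₁.differentiableAt hΩt).hasDerivAt.const_mul μ)
    rw [hD.deriv, Pi.zero_apply, sub_eq_zero, ← hwμ, ← hw t ht, div_mul_cancel₀ _ (hball ht).2]
  exact fun t ht => hΩ.is_const_of_deriv_eq_zero hpc hg hzero ht ht₀

end OneVariable

section SeveralVariables

variable {E : Type*} [NormedAddCommGroup E] [NormedSpace ℂ E] {f f₁ f₂ : E → ℂ} {B : Set E}
  {y z : E}

theorem DifferentiableOn.eqOn_of_convex_of_eventually_re_eq (hf : DifferentiableOn ℂ f B)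
    (hB : IsOpen B) (hBc : Convex ℝ B) (hy : y ∈ B) {c : ℝ} (hc : ∀ᶠ w in 𝓝 y, (f w).re = c) :
    ∀ z ∈ B, f z = f y := by
  intro z hz
  have hline : Tendsto (fun t : ℂ => y + t • (z - y)) (𝓝 0) (𝓝 y) :=
    Continuous.tendsto' (by fun_prop) 0 y (by simp)
  simpa using (hf.comp_add_smul hB y (z - y)).eqOn_of_isPreconnected_of_eventually_re_eq
    (hB.setOf_add_smul_mem y (z - y)) (hBc.setOf_add_smul_mem y (z - y)).isPreconnected
    (by simpa using hy) (hline.eventually hc) 1 (by simpa using hz)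

theorem sub_mul_eq_of_convex_of_im_fderiv_div_eq_zero
    (hf₁ : DifferentiableOn ℂ f₁ B) (hf₂ : DifferentiableOn ℂ f₂ B) (hB : IsOpen B)
    (hBc : Convex ℝ B) (hreal : ∀ y ∈ B, ∀ v, (fderiv ℂ f₂ y v / fderiv ℂ f₁ y v).im = 0)
    (hy : y ∈ B) (hz : z ∈ B) (hne : fderiv ℂ f₁ y (z - y) ≠ 0) :
    f₂ z - fderiv ℂ f₂ y (z - y) / fderiv ℂ f₁ y (z - y) * f₁ z
      = f₂ y - fderiv ℂ f₂ y (z - y) / fderiv ℂ f₁ y (z - y) * f₁ y := by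
  have hderiv : ∀ {g : E → ℂ}, DifferentiableOn ℂ g B → ∀ t ∈ {t : ℂ | y + t • (z - y) ∈ B},
      deriv (fun s : ℂ => g (y + s • (z - y))) t = fderiv ℂ g (y + t • (z - y)) (z - y) :=
    fun hg t ht => (hg.hasDerivAt_add_smul hB ht).deriv
  have h0 : (0 : ℂ) ∈ {t : ℂ | y + t • (z - y) ∈ B} := by simpa using hy
  have := sub_mul_eqOn_of_isPreconnected_of_im_deriv_div_eq_zero (hf₁.comp_add_smul hB y (z - y))
    (hf₂.comp_add_smul hB y (z - y)) (hB.setOf_add_smul_mem y (z - y))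
    (hBc.setOf_add_smul_mem y (z - y)).isPreconnected
    (fun t ht => by rw [hderiv hf₁ t ht, hderiv hf₂ t ht]; exact hreal _ ht _)
    h0 (by rwa [hderiv hf₁ 0 h0, zero_smul, add_zero]) 1 (by simpa using hz)
  simpa [hderiv hf₁ 0 h0, hderiv hf₂ 0 h0] using this

/-- The constant `f₂ - μ f₁` is reached on a neighbourhood of a point `y` which need not be `x₀`:
the line argument only covers `z` off the complex hyperplane `df₁(x₀)(z - x₀) = 0`. -/
theorem exists_eventually_sub_mul_eq_of_re_mul_re_comm (hf₁ : DifferentiableOn ℂ f₁ B)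
    (hf₂ : DifferentiableOn ℂ f₂ B) (hB : IsOpen B) (hBc : Convex ℝ B)
    (hwedge : ∀ y ∈ B, ∀ v w,
      (fderiv ℂ f₁ y v).re * (fderiv ℂ f₂ y w).re = (fderiv ℂ f₁ y w).re * (fderiv ℂ f₂ y v).re)
    {x₀ : E} (hx₀ : x₀ ∈ B) (hne : fderiv ℂ f₁ x₀ ≠ 0) :
    ∃ μ : ℝ, ∃ y ∈ B, ∀ᶠ z in 𝓝 y, f₂ z - μ * f₁ z = f₂ x₀ - μ * f₁ x₀ := by
  obtain ⟨s, hs⟩ := ContinuousLinearMap.exists_ofReal_smul_eq_of_re_mul_re_comm (hwedge x₀ hx₀) hne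
  obtain ⟨u, hu⟩ : ∃ u, fderiv ℂ f₁ x₀ u ≠ 0 := by
    by_contra! h0
    exact hne (ContinuousLinearMap.ext h0)
  have hline : Tendsto (fun t : ℂ => x₀ + t • u) (𝓝[≠] 0) (𝓝 x₀) :=
    (Continuous.tendsto' (by fun_prop) 0 x₀ (by simp)).mono_left nhdsWithin_le_nhds
  obtain ⟨t, htB, ht⟩ := ((hline.eventually (hB.mem_nhds hx₀)).and self_mem_nhdsWithin).exists
  have hoff : IsOpen {z | fderiv ℂ f₁ x₀ (z - x₀) ≠ 0} :=
    isOpen_ne_fun (by fun_prop) continuous_const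
  refine ⟨s, x₀ + t • u, htB, ?_⟩
  filter_upwards [hB.mem_nhds htB, hoff.mem_nhds (by simpa using And.intro ht hu)] with z hz hz'
  have := sub_mul_eq_of_convex_of_im_fderiv_div_eq_zero hf₁ hf₂ hB hBc
    (fun y hy => ContinuousLinearMap.im_apply_div_apply_eq_zero_of_re_mul_re_comm (hwedge y hy))
    hx₀ hz hz'
  rwa [hs, smul_apply, smul_eq_mul, mul_div_cancel_right₀ _ hz'] at this

end SeveralVariables

section Pluriharmonic

variable {E : Type*} [NormedAddCommGroup E] [NormedSpace ℂ E] {f : E → ℂ} {ρ σ ρ₁ ρ₂ : E → ℝ}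
  {U B : Set E} {x : E}

theorem hasFDerivAt_of_eventuallyEq_re (hf : DifferentiableAt ℂ f x)
    (hρ : ρ =ᶠ[𝓝 x] fun y => (f y).re) :
    HasFDerivAt ρ (reCLM.comp ((fderiv ℂ f x).restrictScalars ℝ)) x :=
  (reCLM.hasFDerivAt.comp x (hf.hasFDerivAt.restrictScalars ℝ)).congr_of_eventuallyEq hρ

theorem fderiv_apply_eq_re_of_eqOn (hf : DifferentiableOn ℂ f B) (hB : IsOpen B)
    (hρ : ∀ y ∈ B, ρ y = (f y).re) (hx : x ∈ B) (v : E) :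
    fderiv ℝ ρ x v = (fderiv ℂ f x v).re := by
  rw [(hasFDerivAt_of_eventuallyEq_re (hf.differentiableAt (hB.mem_nhds hx))
    (eventually_of_mem (hB.mem_nhds hx) hρ)).fderiv]
  rfl

namespace PluriharmonicOn

theorem isOpen (h : PluriharmonicOn ρ U) : IsOpen U :=
  isOpen_iff_mem_nhds.2 fun x hx => by
    obtain ⟨V, hV, hVU, -⟩ := h x hx
    exact mem_of_superset hV hVU

theorem differentiableAt (h : PluriharmonicOn ρ U) (hx : x ∈ U) : DifferentiableAt ℝ ρ x := by
  obtain ⟨V, hV, -, f, hf, hρf⟩ := h x hx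
  exact (hasFDerivAt_of_eventuallyEq_re (hf.differentiableAt hV)
    (eventually_of_mem hV hρf)).differentiableAt

theorem add (h : PluriharmonicOn ρ U) (h' : PluriharmonicOn σ U) :
    PluriharmonicOn (fun x => ρ x + σ x) U := by
  intro x hx
  obtain ⟨V, hV, hVU, f, hf, hρf⟩ := h x hx
  obtain ⟨V', hV', -, g, hg, hσg⟩ := h' x hx
  exact ⟨V ∩ V', inter_mem hV hV', inter_subset_left.trans hVU, fun y => f y + g y,
    (hf.mono inter_subset_left).add (hg.mono inter_subset_right),
    fun y hy => by simp [hρf y hy.1, hσg y hy.2]⟩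

theorem const_mul (h : PluriharmonicOn ρ U) (a : ℝ) : PluriharmonicOn (fun x => a * ρ x) U := by
  intro x hx
  obtain ⟨V, hV, hVU, f, hf, hρf⟩ := h x hx
  exact ⟨V, hV, hVU, fun y => a * f y, hf.const_mul _, fun y hy => by simp [hρf y hy]⟩

theorem eqOn_of_eventually_eq (h : PluriharmonicOn ρ U) (hU : IsPreconnected U) {y : E}
    (hy : y ∈ U) {c : ℝ} (hc : ∀ᶠ z in 𝓝 y, ρ z = c) : ∀ x ∈ U, ρ x = c := by
  suffices U ⊆ interior {z | ρ z = c} from fun x hx => (interior_subset (this hx) : x ∈ {z | ρ z = c})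
  refine hU.subset_of_closure_inter_subset isOpen_interior
    ⟨y, hy, mem_interior_iff_mem_nhds.2 hc⟩ ?_
  rintro x ⟨hxS, hxU⟩
  obtain ⟨V, hV, -, f, hf, hρf⟩ := h x hxU
  obtain ⟨r, hr, hrV⟩ := Metric.mem_nhds_iff.1 hV
  obtain ⟨z, hzB, hzS⟩ := mem_closure_iff.1 hxS _ isOpen_ball (mem_ball_self hr)
  have hre : ∀ᶠ w in 𝓝 z, (f w).re = c := by
    filter_upwards [mem_interior_iff_mem_nhds.1 hzS, isOpen_ball.mem_nhds hzB] with w hw hwB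
    rw [← hρf w (hrV hwB)]
    exact hw
  have hconst := (hf.mono hrV).eqOn_of_convex_of_eventually_re_eq isOpen_ball (convex_ball x r)
    hzB hre
  refine mem_interior_iff_mem_nhds.2 (mem_of_superset (ball_mem_nhds x hr) fun w hw => ?_)
  change ρ w = c
  rw [hρf w (hrV hw), hconst w hw, ← hρf z (hrV hzB)]
  exact (interior_subset hzS : z ∈ {z | ρ z = c})

theorem exists_eventually_sub_mul_eq (h₁ : PluriharmonicOn ρ₁ U) (h₂ : PluriharmonicOn ρ₂ U)
    (hwedge : ∀ x ∈ U, ∀ v w : E,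
      fderiv ℝ ρ₁ x v * fderiv ℝ ρ₂ x w = fderiv ℝ ρ₁ x w * fderiv ℝ ρ₂ x v)
    {x₀ : E} (hx₀ : x₀ ∈ U) (hne : fderiv ℝ ρ₁ x₀ ≠ 0) :
    ∃ μ c : ℝ, ∃ y ∈ U, ∀ᶠ z in 𝓝 y, ρ₂ z - μ * ρ₁ z = c := by
  obtain ⟨V₁, hV₁, hV₁U, f₁, hf₁, hρf₁⟩ := h₁ x₀ hx₀
  obtain ⟨V₂, hV₂, -, f₂, hf₂, hρf₂⟩ := h₂ x₀ hx₀
  obtain ⟨r, hr, hrV⟩ := Metric.mem_nhds_iff.1 (inter_mem hV₁ hV₂)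
  have hf₁B : DifferentiableOn ℂ f₁ (ball x₀ r) := hf₁.mono fun y hy => (hrV hy).1
  have hf₂B : DifferentiableOn ℂ f₂ (ball x₀ r) := hf₂.mono fun y hy => (hrV hy).2
  have hd₁ := fun y (hy : y ∈ ball x₀ r) =>
    fderiv_apply_eq_re_of_eqOn hf₁B isOpen_ball (fun y hy => hρf₁ y (hrV hy).1) hy
  have hd₂ := fun y (hy : y ∈ ball x₀ r) =>
    fderiv_apply_eq_re_of_eqOn hf₂B isOpen_ball (fun y hy => hρf₂ y (hrV hy).2) hy
  obtain ⟨μ, y, hy, hμ⟩ := exists_eventually_sub_mul_eq_of_re_mul_re_comm hf₁B hf₂B isOpen_ball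
    (convex_ball x₀ r)
    (fun y hy v w => by
      simpa only [hd₁ y hy, hd₂ y hy] using hwedge y (hV₁U (hrV hy).1) v w)
    (mem_ball_self hr)
    (fun h0 => hne (ContinuousLinearMap.ext fun v => by simp [hd₁ x₀ (mem_ball_self hr), h0]))
  refine ⟨μ, (f₂ x₀ - μ * f₁ x₀).re, y, hV₁U (hrV hy).1, ?_⟩
  filter_upwards [hμ, isOpen_ball.mem_nhds hy] with z hz hzB
  rw [hρf₁ z (hrV hzB).1, hρf₂ z (hrV hzB).2, ← hz]
  simp

end PluriharmonicOn

end Pluriharmonic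

theorem stmt13_general {E : Type*} [NormedAddCommGroup E] [NormedSpace ℂ E]
    (U : Set E) (hconn : IsConnected U)
    (ρ₁ ρ₂ : E → ℝ) (h₁ : PluriharmonicOn ρ₁ U) (h₂ : PluriharmonicOn ρ₂ U) :
    (∃ a₁ a₂ : ℝ, ¬(a₁ = 0 ∧ a₂ = 0) ∧ ∃ c : ℝ, ∀ x ∈ U, a₁ * ρ₁ x + a₂ * ρ₂ x = c)
      ↔ ∀ x ∈ U, ∀ v w : E,
          fderiv ℝ ρ₁ x v * fderiv ℝ ρ₂ x w = fderiv ℝ ρ₁ x w * fderiv ℝ ρ₂ x v := by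
  constructor
  · rintro ⟨a₁, a₂, ha, c, hc⟩ x hx v w
    have hzero : a₁ • fderiv ℝ ρ₁ x + a₂ • fderiv ℝ ρ₂ x = 0 :=
      (((h₁.differentiableAt hx).hasFDerivAt.const_mul a₁).add
        ((h₂.differentiableAt hx).hasFDerivAt.const_mul a₂)).unique
        ((hasFDerivAt_const c x).congr_of_eventuallyEq
          (eventually_of_mem (h₁.isOpen.mem_nhds hx) hc))
    exact mul_eq_mul_of_linear_combination_eq_zero ha
      (by simpa using congr($hzero v)) (by simpa using congr($hzero w))
  · intro hwedge
    by_cases hd : ∀ x ∈ U, fderiv ℝ ρ₁ x = 0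
    · obtain ⟨x₀, hx₀⟩ := hconn.nonempty
      refine ⟨1, 0, by simp, ρ₁ x₀, fun x hx => ?_⟩
      simpa using h₁.isOpen.is_const_of_fderiv_eq_zero hconn.isPreconnected
        (fun y hy => (h₁.differentiableAt hy).differentiableWithinAt) hd hx hx₀
    · push Not at hd
      obtain ⟨x₀, hx₀, hne⟩ := hd
      obtain ⟨μ, c, y, hy, hc⟩ := h₁.exists_eventually_sub_mul_eq h₂ hwedge hx₀ hne
      exact ⟨-μ, 1, by simp, c, ((h₁.const_mul (-μ)).add (h₂.const_mul 1)).eqOn_of_eventually_eq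
        hconn.isPreconnected hy (hc.mono fun z hz => by linarith)⟩

/-- For two real-valued pluriharmonic functions `ρ₁, ρ₂` on a connected open subset of a
complex normed space, the differentials `dρ₁, dρ₂` are linearly dependent (equivalently,
some nontrivial combination `a₁ρ₁ + a₂ρ₂` is constant) iff `dρ₁ ∧ dρ₂ ≡ 0`. -/
theorem stmt13 {E : Type*} [NormedAddCommGroup E] [NormedSpace ℂ E]
    (U : Set E) (hU : IsOpen U) (hconn : IsConnected U)
    (ρ₁ ρ₂ : E → ℝ) (h₁ : PluriharmonicOn ρ₁ U) (h₂ : PluriharmonicOn ρ₂ U) :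
    (∃ a₁ a₂ : ℝ, ¬(a₁ = 0 ∧ a₂ = 0) ∧ ∃ c : ℝ, ∀ x ∈ U, a₁ * ρ₁ x + a₂ * ρ₂ x = c)
      ↔ ∀ x ∈ U, ∀ v w : E,
          fderiv ℝ ρ₁ x v * fderiv ℝ ρ₂ x w = fderiv ℝ ρ₁ x w * fderiv ℝ ρ₂ x v :=
  stmt13_general U hconn ρ₁ ρ₂ h₁ h₂
end

section
/- Let a group Λ act without inversion on a tree T, let v₀ be a vertex, and let Λ_{v₀} be the isotropy (stabilizer) subgroup of v₀. Then the quotient graph T̂ = Λ_{v₀} \ T is again a tree. -/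
/-!
Distance to `v₀` is invariant under the stabilizer of `v₀`, so it descends to a height function on
the quotient, where adjacent orbits have different heights. In the tree, a vertex has at most
one neighbour closer to `v₀`; pulling representatives back along the stabilizer, the same holds in
the quotient. A cycle then has no room at a vertex of maximal height, whose two cycle-neighbours
would both be lower and hence equal.
-/

/-- The quotient of a graph `T` by a group action: vertices are orbits, and two
distinct orbits are adjacent iff they have adjacent representatives. -/
def orbitQuotientGraph {V : Type*} (T : SimpleGraph V) (S : Type*) [Group S]
    [MulAction S V] : SimpleGraph (Quotient (MulAction.orbitRel S V)) where
  Adj a b := a ≠ b ∧ ∃ v w : V,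
    Quotient.mk (MulAction.orbitRel S V) v = a ∧
    Quotient.mk (MulAction.orbitRel S V) w = b ∧ T.Adj v w
  symm := by
    constructor
    rintro a b ⟨hab, v, w, hv, hw, hadj⟩
    exact ⟨hab.symm, w, v, hw, hv, hadj.symm⟩
  loopless := by
    constructor
    rintro a ⟨hab, -⟩
    exact hab rfl

namespace SimpleGraph

variable {V W α : Type*} {G : SimpleGraph V} {H : SimpleGraph W}

lemma Hom.dist_le (f : G →g H) {u v : V} (h : G.Reachable u v) :
    H.dist (f u) (f v) ≤ G.dist u v := by
  obtain ⟨p, hp⟩ := h.exists_walk_length_eq_dist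
  exact (SimpleGraph.dist_le (p.map f)).trans_eq (by rw [Walk.length_map, hp])

lemma Connected.dist_smul_smul {Λ : Type*} [Group Λ] [MulAction Λ V] (hG : G.Connected)
    (hact : ∀ (g : Λ) (v w : V), G.Adj v w → G.Adj (g • v) (g • w)) (g : Λ) (u v : V) :
    G.dist (g • u) (g • v) = G.dist u v := by
  let φ (g : Λ) : G →g G := ⟨(g • ·), hact g _ _⟩
  refine le_antisymm ((φ g).dist_le (hG u v)) ?_
  simpa [φ] using (φ g⁻¹).dist_le (hG (g • u) (g • v))

lemma isAcyclic_of_unique_lower_neighbor [LinearOrder α] (h : V → α)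
    (hne : ∀ ⦃a b⦄, G.Adj a b → h a ≠ h b)
    (huniq : ∀ ⦃a b b'⦄, G.Adj a b → G.Adj a b' → h b < h a → h b' < h a → b = b') :
    G.IsAcyclic := by
  classical
  intro a c hc
  obtain ⟨x, hx, hmax⟩ := c.support.toFinset.exists_max_image h ⟨a, by simp⟩
  rw [List.mem_toFinset] at hx
  set c' := c.rotate x hx
  have hc' : c'.IsCycle := hc.rotate hx
  have hnil : ¬c'.Nil := hc'.not_nil
  have hlower : ∀ y ∈ c'.support, G.Adj x y → h y < h x := fun y hy hxy ↦
    lt_of_le_of_ne (hmax y (by simpa [c'] using hy)) (hne hxy).symm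
  exact hc'.snd_ne_penultimate <| huniq (c'.adj_snd hnil) (c'.adj_penultimate hnil).symm
    (hlower _ (c'.getVert_mem_support 1) (c'.adj_snd hnil))
    (hlower _ (c'.getVert_mem_support _) (c'.adj_penultimate hnil).symm)

lemma IsTree.eq_of_adj_of_dist_lt (hT : G.IsTree) (v₀ : V) {v u u' : V}
    (hu : G.Adj v u) (hu' : G.Adj v u')
    (hdu : G.dist v₀ u < G.dist v₀ v) (hdu' : G.dist v₀ u' < G.dist v₀ v) : u = u' := by
  classical
  obtain ⟨q, hq⟩ := hT.connected.exists_isPath v₀ v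
  suffices key : ∀ w, G.Adj v w → G.dist v₀ w < G.dist v₀ v → w = q.penultimate from
    (key u hu hdu).trans (key u' hu' hdu').symm
  intro w hw hdw
  obtain ⟨p, hp, hpl⟩ := (hT.connected v₀ w).exists_path_of_dist
  have hv : v ∉ p.support := fun hv ↦ by
    have := (SimpleGraph.dist_le (p.takeUntil v hv)).trans (p.length_takeUntil_le_length hv)
    omega
  exact hT.isAcyclic.eq_penultimate_of_adj_end hq hw
    (hT.isAcyclic.mem_support_of_ne_mem_support_of_adj_of_isPath hq hp hw hv)

end SimpleGraph

namespace orbitQuotientGraph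

open SimpleGraph

variable {V S α : Type*} [Group S] [MulAction S V] {T : SimpleGraph V}

local notation "π" => Quotient.mk (MulAction.orbitRel S V)

lemma reachable_mk {v w : V} (h : T.Reachable v w) :
    (orbitQuotientGraph T S).Reachable (π v) (π w) := by
  rw [reachable_iff_reflTransGen] at h ⊢
  refine h.lift' _ fun a b hab ↦ ?_
  change Relation.ReflTransGen _ (π a) (π b)
  by_cases heq : π a = π b
  · exact heq ▸ .refl
  · exact .single ⟨heq, a, b, rfl, rfl, hab⟩

lemma connected (hT : T.Connected) : (orbitQuotientGraph T S).Connected := by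
  refine (connected_iff _).mpr ⟨fun a b ↦ ?_, hT.nonempty.map π⟩
  induction a using Quotient.ind
  induction b using Quotient.ind
  exact reachable_mk (hT _ _)

lemma exists_adj_mk_eq (hS : ∀ (s : S) (v w : V), T.Adj v w → T.Adj (s • v) (s • w))
    {v : V} {b} (h : (orbitQuotientGraph T S).Adj (π v) b) : ∃ w, T.Adj v w ∧ π w = b := by
  obtain ⟨-, v', w, hv', rfl, hvw⟩ := h
  obtain ⟨s, rfl⟩ := MulAction.mem_orbit_iff.mp (Quotient.exact hv'.symm)
  exact ⟨s • w, hS s _ _ hvw, Quotient.sound (MulAction.mem_orbit w s)⟩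

lemma isAcyclic_of_unique_lower_neighbor [LinearOrder α]
    (hS : ∀ (s : S) (v w : V), T.Adj v w → T.Adj (s • v) (s • w))
    (h : V → α) (hinv : ∀ (s : S) (v : V), h (s • v) = h v)
    (hne : ∀ ⦃v w⦄, T.Adj v w → h v ≠ h w)
    (huniq : ∀ ⦃v w w'⦄, T.Adj v w → T.Adj v w' → h w < h v → h w' < h v → w = w') :
    (orbitQuotientGraph T S).IsAcyclic := by
  let hbar : Quotient (MulAction.orbitRel S V) → α :=
    Quotient.lift h fun _ _ hab ↦ by
      obtain ⟨s, rfl⟩ := MulAction.mem_orbit_iff.mp hab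
      exact hinv s _
  refine SimpleGraph.isAcyclic_of_unique_lower_neighbor hbar ?_ ?_
  · rintro _ _ ⟨-, v, w, rfl, rfl, hvw⟩
    exact hne hvw
  · rintro a b b' hb hb' hlt hlt'
    induction a using Quotient.ind with | _ v => ?_
    obtain ⟨w, hvw, rfl⟩ := exists_adj_mk_eq hS hb
    obtain ⟨w', hvw', rfl⟩ := exists_adj_mk_eq hS hb'
    rw [huniq hvw hvw' hlt hlt']

end orbitQuotientGraph

theorem stmt16_general {V Λ : Type*} [Group Λ] [MulAction Λ V] (T : SimpleGraph V)
    (hT : T.IsTree)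
    (hact : ∀ (g : Λ) (v w : V), T.Adj v w → T.Adj (g • v) (g • w))
    (v₀ : V) :
    (orbitQuotientGraph T (MulAction.stabilizer Λ v₀)).IsTree := by
  have hS (s : MulAction.stabilizer Λ v₀) := hact s
  have hinv (s : MulAction.stabilizer Λ v₀) (v : V) : T.dist v₀ (s • v) = T.dist v₀ v := by
    have := hT.connected.dist_smul_smul hS s v₀ v
    rwa [show s • v₀ = v₀ from s.2] at this
  exact ⟨orbitQuotientGraph.connected hT.connected,
    orbitQuotientGraph.isAcyclic_of_unique_lower_neighbor hS (T.dist v₀) hinv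
      (fun _ _ ↦ hT.dist_ne_of_adj v₀) (fun _ _ _ ↦ hT.eq_of_adj_of_dist_lt v₀)⟩

/-- If a group `Λ` acts on a tree `T` by graph automorphisms without inversion, and
`Λ_{v₀}` is the stabilizer of a vertex `v₀`, then the quotient graph `Λ_{v₀}\T`
is again a tree. -/
theorem stmt16 {V Λ : Type*} [Group Λ] [MulAction Λ V] (T : SimpleGraph V)
    (hT : T.IsTree)
    (hact : ∀ (g : Λ) (v w : V), T.Adj v w → T.Adj (g • v) (g • w))
    (hnoinv : ∀ (g : Λ) (v w : V), T.Adj v w → ¬(g • v = w ∧ g • w = v))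
    (v₀ : V) :
    (orbitQuotientGraph T (MulAction.stabilizer Λ v₀)).IsTree :=
  stmt16_general T hT hact v₀
end
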